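/- arXiv:1601.04493 — 4 statements merged into one kernel-verified Lean document; each statement's English description precedes it below -/
import Mathlib

section
/- Let N be a positive integer and suppose g : [0,N] → ℝ has a continuous derivative on (0,N) satisfying 0 < μ ≤ g'(x) ≤ A₀·μ for all x ∈ (0,N). Then for any θ ≥ 0, the number of positive integers n ≤ N with ‖g(n)‖ ≤ θ is at most C·(1 + A₀ μ N)(1 + μ^{−1} θ), where C is an absolute constant. -/
open Finset

/-- `‖θ‖`: the distance from `θ` to the nearest integer. -/
noncomputable def distNearestInt (θ : ℝ) : ℝ := |θ - round θ|

/-!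
Restricted to the integers `1 ≤ n < N`, the mean value theorem makes the values `g n` pairwise
`μ`-separated and confines them to an interval of length `A₀ μ N`. Sort the solutions of
`‖g n‖ ≤ θ` by the integer nearest to `g n`: there are at most `A₀ μ N + 2` such integers `m`, and
the solutions attached to `m` have `g n ∈ [m - θ, m + θ]`, so by separation there are at most
`2θ/μ + 1` of them. The endpoint `n = N`, where nothing is known about `g`, adds one more.
-/

theorem Nat.abs_sub_lt_one_of_floor_eq_floor {x y : ℝ} (hx : 0 ≤ x) (hy : 0 ≤ y)
    (h : ⌊x⌋₊ = ⌊y⌋₊) : |x - y| < 1 := by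
  have hx' := Nat.floor_le hx
  have hy' := Nat.floor_le hy
  have hx'' := Nat.lt_floor_add_one x
  have hy'' := Nat.lt_floor_add_one y
  rw [h] at hx' hx''
  rw [abs_sub_lt_iff]
  constructor <;> linarith

theorem card_le_floor_of_separated {ι : Type*} (s : Finset ι) (f : ι → ℝ) {a b δ : ℝ}
    (hδ : 0 < δ) (hf : ∀ i ∈ s, f i ∈ Set.Icc a b)
    (hsep : ∀ i ∈ s, ∀ j ∈ s, i ≠ j → δ ≤ |f i - f j|) :
    #s ≤ ⌊(b - a) / δ⌋₊ + 1 := by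
  have hoff : ∀ i ∈ s, 0 ≤ (f i - a) / δ := fun i hi ↦
    div_nonneg (sub_nonneg.2 (hf i hi).1) hδ.le
  have hinj : Set.InjOn (fun i ↦ ⌊(f i - a) / δ⌋₊) s := by
    intro i hi j hj hij
    by_contra hne
    have hlt := Nat.abs_sub_lt_one_of_floor_eq_floor (hoff i hi) (hoff j hj) hij
    rw [← sub_div, sub_sub_sub_cancel_right, abs_div, abs_of_pos hδ, div_lt_one hδ] at hlt
    exact (hsep i hi j hj hne).not_gt hlt
  calc #s ≤ #(range (⌊(b - a) / δ⌋₊ + 1)) := by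
        refine card_le_card_of_injOn _ (fun i hi ↦ ?_) hinj
        simp only [coe_range, Set.mem_Iio, Nat.lt_succ_iff]
        exact Nat.floor_le_floor (by gcongr; exact (hf i hi).2)
    _ = ⌊(b - a) / δ⌋₊ + 1 := card_range _

theorem card_le_of_separated_of_distNearestInt_le {ι : Type*} (s : Finset ι)
    (f : ι → ℝ) {a b δ θ : ℝ} (hδ : 0 < δ) (hf : ∀ i ∈ s, f i ∈ Set.Icc a b)
    (hsep : ∀ i ∈ s, ∀ j ∈ s, i ≠ j → δ ≤ |f i - f j|)
    (hθ : ∀ i ∈ s, distNearestInt (f i) ≤ θ) :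
    #s ≤ (⌊2 * θ / δ⌋₊ + 1) * (⌊b - a + 1⌋₊ + 1) := by
  have hfiber : ∀ m : ℤ, #{i ∈ s | round (f i) = m} ≤ ⌊2 * θ / δ⌋₊ + 1 := fun m ↦ by
    have := card_le_floor_of_separated {i ∈ s | round (f i) = m} f hδ (a := m - θ) (b := m + θ)
      (fun i hi ↦ ?_) (fun i hi j hj ↦ hsep i (mem_filter.1 hi).1 j (mem_filter.1 hj).1)
    · convert this using 4; ring
    · obtain ⟨his, rfl⟩ := mem_filter.1 hi
      have := abs_le.1 (hθ i his)
      constructor <;> linarith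
  have himage : #(s.image fun i ↦ round (f i)) ≤ ⌊b - a + 1⌋₊ + 1 := by
    have := card_le_floor_of_separated (s.image fun i ↦ round (f i)) (fun m : ℤ ↦ (m : ℝ))
      one_pos (a := a - 1 / 2) (b := b + 1 / 2) ?_ ?_
    · convert this using 3; ring
    · simp only [mem_image, forall_exists_index, and_imp, forall_apply_eq_imp_iff₂]
      intro i hi
      have hround := abs_le.1 (abs_sub_round (f i))
      have hfi := hf i hi
      constructor <;> linarith [hfi.1, hfi.2]
    · intro m _ m' _ hne
      exact_mod_cast Int.one_le_abs (sub_ne_zero.2 hne)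
  exact (card_le_mul_card_image s _ fun m _ ↦ hfiber m).trans (Nat.mul_le_mul_left _ himage)

theorem mul_sub_le_sub_of_le_hasDerivAt {g g' : ℝ → ℝ} {l r m x y : ℝ}
    (hg : ∀ z ∈ Set.Ioo l r, HasDerivAt g (g' z) z) (hm : ∀ z ∈ Set.Ioo l r, m ≤ g' z)
    (hx : x ∈ Set.Ioo l r) (hy : y ∈ Set.Ioo l r) (hxy : x ≤ y) :
    m * (y - x) ≤ g y - g x := by
  refine (convex_Ioo l r).mul_sub_le_image_sub_of_le_deriv
    (fun z hz ↦ (hg z hz).continuousAt.continuousWithinAt) ?_ ?_ x hx y hy hxy <;>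
    rw [interior_Ioo]
  · exact fun z hz ↦ (hg z hz).differentiableAt.differentiableWithinAt
  · exact fun z hz ↦ (hg z hz).deriv ▸ hm z hz

theorem sub_le_mul_sub_of_hasDerivAt_le {g g' : ℝ → ℝ} {l r M x y : ℝ}
    (hg : ∀ z ∈ Set.Ioo l r, HasDerivAt g (g' z) z) (hM : ∀ z ∈ Set.Ioo l r, g' z ≤ M)
    (hx : x ∈ Set.Ioo l r) (hy : y ∈ Set.Ioo l r) (hxy : x ≤ y) :
    g y - g x ≤ M * (y - x) := by
  have := mul_sub_le_sub_of_le_hasDerivAt (g := -g) (fun z hz ↦ (hg z hz).neg)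
    (fun z hz ↦ neg_le_neg (hM z hz)) hx hy hxy
  simp only [Pi.neg_apply] at this
  linarith

theorem le_abs_sub_of_one_le_abs_sub {g g' : ℝ → ℝ} {l r m x y : ℝ} (hm₀ : 0 ≤ m)
    (hg : ∀ z ∈ Set.Ioo l r, HasDerivAt g (g' z) z) (hm : ∀ z ∈ Set.Ioo l r, m ≤ g' z)
    (hx : x ∈ Set.Ioo l r) (hy : y ∈ Set.Ioo l r) (hxy : 1 ≤ |x - y|) :
    m ≤ |g x - g y| := by
  wlog hle : x ≤ y generalizing x y
  · rw [abs_sub_comm] at hxy ⊢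
    exact this hy hx hxy (le_of_not_ge hle)
  rw [abs_sub_comm] at hxy ⊢
  rw [abs_of_nonneg (sub_nonneg.2 hle)] at hxy
  calc m ≤ m * (y - x) := le_mul_of_one_le_right hm₀ hxy
    _ ≤ g y - g x := mul_sub_le_sub_of_le_hasDerivAt hg hm hx hy hle
    _ ≤ |g y - g x| := le_abs_self _

theorem card_filter_distNearestInt_le {N : ℕ} {g g' : ℝ → ℝ} {μ M : ℝ} (θ : ℝ) (hμ : 0 < μ)
    (hg : ∀ x ∈ Set.Ioo (0 : ℝ) N, HasDerivAt g (g' x) x)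
    (hbound : ∀ x ∈ Set.Ioo (0 : ℝ) N, μ ≤ g' x ∧ g' x ≤ M) :
    #{n ∈ Ico 1 N | distNearestInt (g (n : ℕ)) ≤ θ} ≤
    (⌊2 * θ / μ⌋₊ + 1) * (⌊M * N + 1⌋₊ + 1) := by
  set S : Finset ℕ := {n ∈ Ico 1 N | distNearestInt (g n) ≤ θ}
  have hIoo : ∀ n ∈ Ico 1 N, (n : ℝ) ∈ Set.Ioo 0 (N : ℝ) := fun n hn ↦ by
    obtain ⟨h₁, h₂⟩ := mem_Ico.1 hn
    exact ⟨by exact_mod_cast h₁, by exact_mod_cast h₂⟩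
  have hsep : ∀ n ∈ S, ∀ n' ∈ S, n ≠ n' → μ ≤ |g n - g n'| := fun n hn n' hn' hne ↦
    le_abs_sub_of_one_le_abs_sub hμ.le hg (fun x hx ↦ (hbound x hx).1)
      (hIoo n (mem_filter.1 hn).1) (hIoo n' (mem_filter.1 hn').1)
      (by exact_mod_cast Int.one_le_abs (sub_ne_zero.2 (Nat.cast_injective.ne hne)))
  have hrange : ∀ n ∈ S, g n ∈ Set.Icc (g 1) (g 1 + M * N) := by
    intro n hn
    have hn := (mem_filter.1 hn).1
    obtain ⟨h1n, hnN⟩ := mem_Ico.1 hn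
    have h1 : (1 : ℕ) ∈ Ico 1 N := mem_Ico.2 ⟨le_rfl, h1n.trans_lt hnN⟩
    have hle : ((1 : ℕ) : ℝ) ≤ n := by exact_mod_cast h1n
    have hM := (hbound n (hIoo n hn)).1.trans (hbound n (hIoo n hn)).2
    have hlow := mul_sub_le_sub_of_le_hasDerivAt hg (fun x hx ↦ (hbound x hx).1)
      (hIoo 1 h1) (hIoo n hn) hle
    have hup := sub_le_mul_sub_of_hasDerivAt_le hg (fun x hx ↦ (hbound x hx).2)
      (hIoo 1 h1) (hIoo n hn) hle
    have hnN' : (n : ℝ) ≤ N := by exact_mod_cast hnN.le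
    push_cast at hle hlow hup
    constructor <;> nlinarith
  have := card_le_of_separated_of_distNearestInt_le S (fun n : ℕ ↦ g n) hμ hrange hsep
    (fun n hn ↦ (mem_filter.1 hn).2)
  rwa [add_sub_cancel_left] at this

theorem natCard_setOf_le_card_filter_Ico_add_one (N : ℕ) (P : ℕ → Prop) [DecidablePred P] :
    Nat.card {n : ℕ | 1 ≤ n ∧ n ≤ N ∧ P n} ≤ #{n ∈ Ico 1 N | P n} + 1 := by
  have hsub : {n : ℕ | 1 ≤ n ∧ n ≤ N ∧ P n} ⊆ ↑(insert N {n ∈ Ico 1 N | P n}) := by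
    rintro n ⟨h₁, h₂, h₃⟩
    rcases h₂.eq_or_lt with rfl | h₂
    · exact mem_insert_self _ _
    · exact mem_insert_of_mem (mem_filter.2 ⟨mem_Ico.2 ⟨h₁, h₂⟩, h₃⟩)
  calc _ ≤ Nat.card (insert N {n ∈ Ico 1 N | P n} : Finset ℕ) :=
        Nat.card_mono (finite_toSet _) hsub
    _ = #(insert N {n ∈ Ico 1 N | P n}) := Nat.card_eq_finsetCard _
    _ ≤ _ := card_insert_le _ _

theorem floor_mul_floor_add_one_le {X Y : ℝ} (hX : 0 ≤ X) (hY : 0 ≤ Y) :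
    (((⌊2 * Y⌋₊ + 1) * (⌊X + 1⌋₊ + 1) + 1 : ℕ) : ℝ) ≤ 5 * (1 + X) * (1 + Y) := by
  have hY' := Nat.floor_le (show 0 ≤ 2 * Y by positivity)
  have hX' := Nat.floor_le (show 0 ≤ X + 1 by positivity)
  push_cast
  calc _ ≤ (2 * Y + 1) * (X + 1 + 1) + 1 := by gcongr
    _ ≤ 5 * (1 + X) * (1 + Y) := by nlinarith [mul_nonneg hX hY]

/-- **Lemma 2 (spacing lemma)**: let `N` be a positive integer and `g : [0,N] → ℝ` have a
continuous derivative on `(0,N)` with `0 < μ ≤ g'(x) ≤ A₀ μ` there.  Then for any `θ ≥ 0`,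
`#{n ≤ N : ‖g(n)‖ ≤ θ} ≤ C (1 + A₀ μ N)(1 + μ⁻¹ θ)` with an absolute constant `C`. -/
theorem spacing_lemma : ∃ C : ℝ, 0 < C ∧
    ∀ (N : ℕ) (g g' : ℝ → ℝ) (μ A₀ θ : ℝ),
      0 < N → 0 < μ → 0 ≤ θ →
      (∀ x ∈ Set.Ioo (0 : ℝ) (N : ℝ), HasDerivAt g (g' x) x) →
      ContinuousOn g' (Set.Ioo (0 : ℝ) (N : ℝ)) →
      (∀ x ∈ Set.Ioo (0 : ℝ) (N : ℝ), μ ≤ g' x ∧ g' x ≤ A₀ * μ) →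
      ((Nat.card {n : ℕ | 1 ≤ n ∧ n ≤ N ∧ distNearestInt (g n) ≤ θ} : ℕ) : ℝ) ≤
        C * (1 + A₀ * μ * N) * (1 + μ⁻¹ * θ) := by
  refine ⟨5, by norm_num, fun N g g' μ A₀ θ hN hμ hθ hg _ hbound ↦ ?_⟩
  have hA : 0 ≤ A₀ * μ := by
    have hN' : (1 : ℝ) ≤ N := by exact_mod_cast hN
    obtain ⟨h₁, h₂⟩ := hbound (1 / 2) ⟨by norm_num, by linarith⟩
    linarith
  have hcount := (natCard_setOf_le_card_filter_Ico_add_one N _).trans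
    (Nat.add_le_add_right (card_filter_distNearestInt_le θ hμ hg hbound) 1)
  rw [mul_div_assoc, div_eq_inv_mul] at hcount
  exact (Nat.cast_le.2 hcount).trans (floor_mul_floor_add_one_le (by positivity) (by positivity))
end

section
/- Let k ≥ 2 be an integer, N ≥ 1, and suppose f : [0,N] → ℝ has continuous derivatives up to order k on (0,N), with 0 < λ_k ≤ f^{(k)}(x) ≤ A·λ_k for all x ∈ (0,N), where A ≥ 1 and A·λ_k ≤ 1/4. Put H = ⌊(Aλ_k)^{−1/k}⌋ and let 𝒩 be the number of pairs of positive integers m, n ≤ N such that ‖f^{(j)}(m)/j! − f^{(j)}(n)/j!‖ ≤ 2H^{−j} for every j with 1 ≤ j ≤ k−1. Then 𝒩 ≤ C·A²·(k−1)!·N·λ_k^{−1/k}·(1 + N λ_k), where C is an absolute constant. -/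
/-!
Keep only the condition with `j = k - 1`. Put `g(n) = f⁽ᵏ⁻¹⁾(n) / (k-1)!`; by the mean value
theorem `g` increases on `[0, N]` with slope between `λ/(k-1)!` and `Aλ/(k-1)!`. For fixed `m`,
the `n` with `‖g m - g n‖ ≤ 2H^{1-k}` are sorted by the integer nearest to `g m - g n`
(`≲ AλN/(k-1)! + 1` values) and, for a given integer, lie in a window of
`≲ (k-1)!/(H^{k-1}λ) + 1` consecutive integers. Comparing the product with the claim uses
`Aλ(H+1)^k ≥ 1`. The factor `((H+1)/H)^{k-1}` lost by flooring is bounded when `k ≲ H`;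
otherwise `((H+1)^2/H)^{k-1} ≤ (k-1)!`, which handles the case `N ≳ A²(k-1)! λ^{-1/k}`, while
for smaller `N` the trivial bound `N²` suffices.
-/

open Finset

open Real
open scoped Nat

theorem abs_round_le_floor_add {x B δ : ℝ} (hx : |x| ≤ B) (hδ : distNearestInt x ≤ δ) :
    |round x| ≤ (⌊B + δ⌋₊ : ℤ) := by
  have h : (|round x| : ℝ) ≤ B + δ := by
    have := abs_sub_abs_le_abs_sub (round x : ℝ) x
    rw [abs_sub_comm] at this
    unfold distNearestInt at hδ
    linarith
  have h' : ((|round x|).toNat : ℝ) ≤ B + δ := by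
    rwa [← Int.cast_natCast, Int.toNat_of_nonneg (abs_nonneg _), Int.cast_abs]
  have := Nat.le_floor h'
  omega

/-- For fixed `a` and a fixed integer nearest to `g a - g b`, the admissible `b` lie in a window of
length `2δ / c`, so they are told apart by their residues modulo `⌊2δ / c⌋ + 1`. -/
theorem card_filter_distNearestInt_sub_le {s : Finset ℕ} {g : ℕ → ℝ} {c B δ : ℝ}
    (hc : 0 < c) (hδ : 0 ≤ δ)
    (hexpand : ∀ a ∈ s, ∀ b ∈ s, c * |(a : ℝ) - b| ≤ |g a - g b|)
    (hB : ∀ a ∈ s, ∀ b ∈ s, |g a - g b| ≤ B) :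
    (#{p ∈ s ×ˢ s | distNearestInt (g p.1 - g p.2) ≤ δ} : ℝ) ≤
      #s * (2 * (B + δ) + 1) * (2 * δ / c + 1) := by
  obtain rfl | ⟨a₀, ha₀⟩ := s.eq_empty_or_nonempty
  · simp
  have hB0 : 0 ≤ B := (abs_nonneg _).trans (hB a₀ ha₀ a₀ ha₀)
  set S := {p ∈ s ×ˢ s | distNearestInt (g p.1 - g p.2) ≤ δ}
  set R := ⌊B + δ⌋₊
  set L := ⌊2 * δ / c⌋₊
  let encode : ℕ × ℕ → ℕ × ℤ × ℕ := fun p => (p.1, round (g p.1 - g p.2), p.2 % (L + 1))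
  have hmaps : Set.MapsTo encode S (s ×ˢ Icc (-(R : ℤ)) R ×ˢ range (L + 1) : Finset _) := by
    intro p hp
    rw [mem_coe, mem_filter, mem_product] at hp
    obtain ⟨⟨ha, hb⟩, hp⟩ := hp
    rw [mem_coe, mem_product, mem_product, mem_Icc, mem_range]
    exact ⟨ha, abs_le.mp (abs_round_le_floor_add (hB _ ha _ hb) hp), Nat.mod_lt _ L.succ_pos⟩
  have hinj : Set.InjOn encode S := by
    rintro ⟨a, b⟩ hp ⟨a', b'⟩ hq hencode
    rw [mem_coe, mem_filter, mem_product] at hp hq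
    simp only [encode, Prod.mk.injEq] at hencode
    obtain ⟨rfl, hround, hmod⟩ := hencode
    have hclose : |g b - g b'| ≤ 2 * δ := by
      unfold distNearestInt at hp hq
      rw [hround] at hp
      calc |g b - g b'|
          = |(g a - g b' - round (g a - g b')) - (g a - g b - round (g a - g b'))| := by
            ring_nf
        _ ≤ 2 * δ := (abs_sub _ _).trans (by linarith [hp.2, hq.2])
    have hgap : |(b' : ℝ) - b| < L + 1 := by
      have h : c * |(b' : ℝ) - b| ≤ 2 * δ := by
        rw [abs_sub_comm]; exact (hexpand _ hp.1.2 _ hq.1.2).trans hclose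
      exact ((le_div_iff₀' hc).mpr h).trans_lt (Nat.lt_floor_add_one _)
    exact Prod.ext rfl (Nat.ModEq.eq_of_abs_lt hmod (by exact_mod_cast hgap))
  have hcard := card_le_card_of_injOn encode hmaps hinj
  have hR : ((2 * R + 1 : ℕ) : ℝ) ≤ 2 * (B + δ) + 1 := by
    push_cast; linarith [Nat.floor_le (add_nonneg hB0 hδ)]
  have hL : ((L + 1 : ℕ) : ℝ) ≤ 2 * δ / c + 1 := by
    push_cast; linarith [Nat.floor_le (div_nonneg (mul_nonneg zero_le_two hδ) hc.le)]
  calc (#S : ℝ) ≤ #s * ((2 * R + 1 : ℕ) : ℝ) * ((L + 1 : ℕ) : ℝ) := by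
        have : #(Icc (-(R : ℤ)) R) = 2 * R + 1 := by simp; omega
        simpa [card_product, this, mul_assoc] using (Nat.cast_le (α := ℝ)).mpr hcard
    _ ≤ _ := by gcongr

theorem natCard_le_card_filter_Icc_floor {N : ℝ} {R Q : ℕ × ℕ → Prop} [DecidablePred Q]
    (hRQ : ∀ p, R p → Q p) :
    Nat.card {p : ℕ × ℕ | 1 ≤ p.1 ∧ (p.1 : ℝ) ≤ N ∧ 1 ≤ p.2 ∧ (p.2 : ℝ) ≤ N ∧ R p} ≤
      #{p ∈ Icc 1 ⌊N⌋₊ ×ˢ Icc 1 ⌊N⌋₊ | Q p} := by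
  rw [← Nat.card_eq_finsetCard]
  refine Nat.card_mono (Finset.finite_toSet _) ?_
  rintro p ⟨h1, h2, h3, h4, hR⟩
  simp only [coe_filter, mem_product, mem_Icc]
  exact ⟨⟨⟨h1, Nat.le_floor h2⟩, h3, Nat.le_floor h4⟩, hRQ p hR⟩

theorem Convex.abs_image_sub_bounds_of_deriv_mem_Icc {D : Set ℝ} (hD : Convex ℝ D)
    {f : ℝ → ℝ} (hf : ContinuousOn f D) (hf' : DifferentiableOn ℝ f (interior D)) {lo hi : ℝ}
    (hlo : 0 ≤ lo) (hderiv : ∀ x ∈ interior D, deriv f x ∈ Set.Icc lo hi) {x y : ℝ}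
    (hx : x ∈ D) (hy : y ∈ D) : lo * |x - y| ≤ |f x - f y| ∧ |f x - f y| ≤ hi * |x - y| := by
  wlog hxy : x ≤ y generalizing x y
  · simpa only [abs_sub_comm] using this hy hx (le_of_not_ge hxy)
  have hlow :=
    hD.mul_sub_le_image_sub_of_le_deriv hf hf' (fun z hz => (hderiv z hz).1) x hx y hy hxy
  have hupp :=
    hD.image_sub_le_mul_sub_of_deriv_le hf hf' (fun z hz => (hderiv z hz).2) x hx y hy hxy
  rw [abs_sub_comm x, abs_of_nonneg (sub_nonneg.mpr hxy), abs_sub_comm,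
    abs_of_nonneg ((mul_nonneg hlo (sub_nonneg.mpr hxy)).trans hlow)]
  exact ⟨hlow, hupp⟩

theorem deriv_iteratedDerivWithin_of_mem_nhds {f : ℝ → ℝ} {s : Set ℝ} {x : ℝ} (n : ℕ)
    (hs : s ∈ nhds x) :
    deriv (iteratedDerivWithin n f s) x = iteratedDerivWithin (n + 1) f s x := by
  rw [iteratedDerivWithin_succ, derivWithin_of_mem_nhds hs]

theorem abs_iteratedDerivWithin_sub_bounds {f : ℝ → ℝ} {m : ℕ} {a b lo hi : ℝ} (hab : a < b)
    (hf : ContDiffOn ℝ (m + 1) f (Set.Icc a b)) (hlo : 0 ≤ lo)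
    (hderiv : ∀ x ∈ Set.Ioo a b, iteratedDerivWithin (m + 1) f (Set.Icc a b) x ∈ Set.Icc lo hi)
    {x y : ℝ} (hx : x ∈ Set.Icc a b) (hy : y ∈ Set.Icc a b) :
    lo * |x - y| ≤
        |iteratedDerivWithin m f (Set.Icc a b) x - iteratedDerivWithin m f (Set.Icc a b) y| ∧
      |iteratedDerivWithin m f (Set.Icc a b) x - iteratedDerivWithin m f (Set.Icc a b) y| ≤
        hi * |x - y| := by
  have hU := uniqueDiffOn_Icc hab
  refine (convex_Icc a b).abs_image_sub_bounds_of_deriv_mem_Icc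
    (hf.continuousOn_iteratedDerivWithin (by norm_cast; omega) hU) ?_ hlo ?_ hx hy
  · rw [interior_Icc]
    exact (hf.differentiableOn_iteratedDerivWithin (by norm_cast; omega) hU).mono
      Set.Ioo_subset_Icc_self
  · rw [interior_Icc]
    intro z hz
    rw [deriv_iteratedDerivWithin_of_mem_nhds m (Icc_mem_nhds hz.1 hz.2)]
    exact hderiv z hz

theorem card_filter_distNearestInt_iteratedDerivWithin_div_le {f : ℝ → ℝ} {m : ℕ}
    {N A lam K δ : ℝ} (hN : 0 < N) (hlam : 0 < lam) (hK : 0 < K) (hδ : 0 ≤ δ)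
    (hf : ContDiffOn ℝ (m + 1) f (Set.Icc 0 N))
    (hd : ∀ x ∈ Set.Ioo 0 N,
      iteratedDerivWithin (m + 1) f (Set.Icc 0 N) x ∈ Set.Icc lam (A * lam)) :
    (#{p ∈ Icc 1 ⌊N⌋₊ ×ˢ Icc 1 ⌊N⌋₊ | distNearestInt
        (iteratedDerivWithin m f (Set.Icc 0 N) p.1 / K -
          iteratedDerivWithin m f (Set.Icc 0 N) p.2 / K) ≤ δ} : ℝ) ≤
      N * (2 * (A * lam * N / K + δ) + 1) * (2 * δ / (lam / K) + 1) := by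
  set F := iteratedDerivWithin m f (Set.Icc 0 N)
  have hAlam : 0 ≤ A * lam := by
    obtain ⟨hlo, hhi⟩ := hd (N / 2) ⟨by linarith, by linarith⟩
    linarith
  have hmem : ∀ n ∈ Icc 1 ⌊N⌋₊, (n : ℝ) ∈ Set.Icc 0 N := fun n hn =>
    ⟨n.cast_nonneg, (Nat.cast_le.mpr (mem_Icc.mp hn).2).trans (Nat.floor_le hN.le)⟩
  have hF : ∀ a ∈ Icc 1 ⌊N⌋₊, ∀ b ∈ Icc 1 ⌊N⌋₊,
      lam / K * |(a : ℝ) - b| ≤ |F a / K - F b / K| ∧ |F a / K - F b / K| ≤ A * lam * N / K := by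
    intro a ha b hb
    obtain ⟨hlo, hhi⟩ :=
      abs_iteratedDerivWithin_sub_bounds hN hf hlam.le hd (hmem a ha) (hmem b hb)
    have hab : |(a : ℝ) - b| ≤ N := abs_sub_le_of_nonneg_of_le (hmem a ha).1 (hmem a ha).2
      (hmem b hb).1 (hmem b hb).2
    rw [← sub_div, abs_div, abs_of_pos hK, div_mul_eq_mul_div]
    exact ⟨by gcongr, by gcongr; exact hhi.trans (by gcongr)⟩
  calc _ ≤ #(Icc 1 ⌊N⌋₊) * (2 * (A * lam * N / K + δ) + 1) * (2 * δ / (lam / K) + 1) :=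
        card_filter_distNearestInt_sub_le (g := fun n => F n / K) (div_pos hlam hK) hδ
          (fun a ha b hb => (hF a ha b hb).1) (fun a ha b hb => (hF a ha b hb).2)
    _ ≤ _ := by
      rw [Nat.card_Icc, Nat.add_sub_cancel]
      have : 0 ≤ A * lam * N / K := div_nonneg (mul_nonneg hAlam hN.le) hK.le
      gcongr
      exact Nat.floor_le hN.le

theorem one_le_floor_rpow_neg_inv {t : ℝ} (ht : 0 < t) (ht1 : t ≤ 1) (k : ℕ) :
    1 ≤ ⌊t ^ (-(1 : ℝ) / k)⌋₊ :=
  Nat.le_floor <| by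
    simpa using one_le_rpow_of_pos_of_le_one_of_nonpos ht ht1
      (div_nonpos_of_nonpos_of_nonneg (neg_nonpos.mpr zero_le_one) k.cast_nonneg)

theorem floor_rpow_neg_inv_le_rpow_neg_inv {A lam : ℝ} (hA : 1 ≤ A) (hlam : 0 < lam) (k : ℕ) :
    (⌊(A * lam) ^ (-(1 : ℝ) / k)⌋₊ : ℝ) ≤ lam ^ (-(1 : ℝ) / k) :=
  (Nat.floor_le (by positivity)).trans (rpow_le_rpow_of_nonpos hlam
    (le_mul_of_one_le_left hlam.le hA)
    (div_nonpos_of_nonpos_of_nonneg (neg_nonpos.mpr zero_le_one) k.cast_nonneg))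

theorem one_le_mul_floor_rpow_neg_inv_add_one_pow {t : ℝ} (ht : 0 < t) {k : ℕ} (hk : k ≠ 0) :
    1 ≤ t * (⌊t ^ (-(1 : ℝ) / k)⌋₊ + 1) ^ k := by
  have hlt : (t ^ (-(1 : ℝ) / k)) ^ k < (⌊t ^ (-(1 : ℝ) / k)⌋₊ + 1) ^ k :=
    pow_lt_pow_left₀ (Nat.lt_floor_add_one _) (rpow_nonneg ht.le _) hk
  rw [← rpow_natCast, ← rpow_mul ht.le, div_mul_cancel₀ _ (by exact_mod_cast hk),
    rpow_neg_one] at hlt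
  rw [← inv_mul_le_iff₀ ht, mul_one]
  exact hlt.le

theorem div_exp_one_pow_le_factorial (m : ℕ) : (m / exp 1) ^ m ≤ m ! := by
  rw [div_pow, ← exp_nat_mul, mul_one, div_le_iff₀ (exp_pos _), ← div_le_iff₀' (by positivity)]
  exact pow_div_factorial_le_exp _ m.cast_nonneg m

/-- `((H + 1) / H) ^ m` is what flooring `H ≤ u < H + 1` costs in `u ^ m`: it is bounded when
`m ≤ 12 H`, and otherwise `(H + 1) ^ 2 / H ≤ 4 H < m / e` lets `m !` absorb even its square. -/
theorem add_one_pow_le_exp_mul_pow_or_le_factorial_mul_pow {H : ℝ} (hH : 1 ≤ H) (m : ℕ) :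
    (H + 1) ^ m ≤ exp 12 * H ^ m ∨ (H + 1) ^ (2 * m) ≤ m ! * H ^ m := by
  have hH0 : 0 < H := one_pos.trans_le hH
  by_cases hm : (m : ℝ) ≤ 12 * H
  · left
    calc (H + 1) ^ m = (1 / H + 1) ^ m * H ^ m := by
          rw [← mul_pow, add_mul, one_div_mul_cancel hH0.ne', one_mul, add_comm]
      _ ≤ exp (1 / H) ^ m * H ^ m := by gcongr; exact add_one_le_exp _
      _ = exp (m * (1 / H)) * H ^ m := by rw [exp_nat_mul]
      _ ≤ exp 12 * H ^ m := by gcongr; rw [mul_one_div, div_le_iff₀ hH0]; exact hm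
  · right
    have hbase : (H + 1) ^ 2 / H ≤ m / exp 1 := by
      rw [div_le_div_iff₀ hH0 (exp_pos 1)]
      nlinarith [exp_one_lt_d9]
    calc (H + 1) ^ (2 * m) = ((H + 1) ^ 2 / H) ^ m * H ^ m := by
          rw [div_pow, pow_mul, div_mul_cancel₀ _ (by positivity)]
      _ ≤ (m / exp 1) ^ m * H ^ m := by gcongr
      _ ≤ m ! * H ^ m := by gcongr; exact div_exp_one_pow_le_factorial m

theorem one_le_mul_pow_of_one_le_mul_add_one_pow {A lam K H X : ℝ} {m : ℕ} (hA : 0 ≤ A)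
    (hlam : 0 < lam) (hK : 1 ≤ K) (hH : 1 ≤ H) (hHX : H ≤ X)
    (hfloor : 1 ≤ A * lam * (H + 1) ^ (m + 1))
    (hρ : (H + 1) ^ m ≤ exp 12 * H ^ m ∨ (H + 1) ^ (2 * m) ≤ K * H ^ m) :
    1 ≤ 2 * exp 12 * A * K * X * lam * H ^ m := by
  have he : 1 ≤ exp 12 := one_le_exp (by norm_num)
  have hρK : (H + 1) ^ m ≤ exp 12 * K * H ^ m := by
    rcases hρ with hρ | hρ
    · exact hρ.trans (by gcongr; exact le_mul_of_one_le_right (by positivity) hK)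
    · calc (H + 1) ^ m ≤ (H + 1) ^ (2 * m) := pow_le_pow_right₀ (by linarith) (by omega)
        _ ≤ K * H ^ m := hρ
        _ ≤ exp 12 * K * H ^ m := by
          gcongr; exact le_mul_of_one_le_left (by linarith) he
  calc 1 ≤ A * lam * (H + 1) * (H + 1) ^ m := by rwa [mul_assoc _ (H + 1), ← pow_succ']
    _ ≤ A * lam * (2 * X) * (exp 12 * K * H ^ m) := by
      have : 0 ≤ X := by linarith
      gcongr; linarith
    _ = _ := by ring

theorem div_pow_mul_le_of_one_le_mul_add_one_pow {A lam K H X : ℝ} {m : ℕ} (hA : 1 ≤ A)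
    (hlam : 0 < lam) (hK : 1 ≤ K) (hH : 1 ≤ H) (hHX : H ≤ X)
    (hfloor : 1 ≤ A * lam * (H + 1) ^ (m + 1))
    (hρ : (H + 1) ^ m ≤ exp 12 * H ^ m ∨ (H + 1) ^ (2 * m) ≤ K * H ^ m) :
    K / (H ^ m * lam) ≤ 2 * exp 12 * (A ^ 2 * K * X) ∨
      K / (H ^ m * lam) ≤ 4 * (A ^ 2 * K * X) ^ 2 * lam := by
  have hfloor' : 1 ≤ A * lam * (H + 1) * (H + 1) ^ m := by
    rwa [mul_assoc _ (H + 1), ← pow_succ']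
  have hHX2 : H + 1 ≤ 2 * X := by linarith
  have hX : 0 ≤ X := by linarith
  have hAA : A ≤ A ^ 2 := by nlinarith
  rw [div_le_iff₀ (by positivity), div_le_iff₀ (by positivity)]
  rcases hρ with hρ | hρ
  · left
    calc K ≤ K * (A * lam * (H + 1) * (H + 1) ^ m) :=
          le_mul_of_one_le_right (by linarith) hfloor'
      _ ≤ K * (A * lam * (2 * X) * (exp 12 * H ^ m)) := by gcongr
      _ = 2 * exp 12 * (A * K * X) * (H ^ m * lam) := by ring
      _ ≤ 2 * exp 12 * (A ^ 2 * K * X) * (H ^ m * lam) := by gcongr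
  · right
    have hsq : 1 ≤ (A * lam * (H + 1) * (H + 1) ^ m) ^ 2 := one_le_pow₀ hfloor'
    calc K ≤ K * (A * lam * (H + 1) * (H + 1) ^ m) ^ 2 :=
          le_mul_of_one_le_right (by linarith) hsq
      _ = K * A ^ 2 * lam ^ 2 * (H + 1) ^ 2 * (H + 1) ^ (2 * m) := by ring
      _ ≤ K * A ^ 2 * lam ^ 2 * (2 * X) ^ 2 * (K * H ^ m) := by gcongr
      _ = 4 * (A * K * X) ^ 2 * lam * (H ^ m * lam) := by ring
      _ ≤ 4 * (A ^ 2 * K * X) ^ 2 * lam * (H ^ m * lam) := by gcongr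

theorem pair_count_bound_le {N A lam K P X : ℝ} (hA : 1 ≤ A) (hlam : 0 < lam) (hN : 0 ≤ N)
    (hK : 1 ≤ K) (hX : 1 ≤ X) (hP : 1 ≤ P) (h1 : 1 ≤ 2 * exp 12 * A * K * X * lam * P)
    (h2 : K / (P * lam) ≤ 2 * exp 12 * (A ^ 2 * K * X) ∨
      K / (P * lam) ≤ 4 * (A ^ 2 * K * X) * (N * lam)) :
    (2 * (A * lam * N / K + 2 / P) + 1) * (2 * (2 / P) / (lam / K) + 1) ≤
      100 * exp 12 * (A ^ 2 * K * X) * (1 + N * lam) := by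
  have he : 1 ≤ exp 12 := one_le_exp (by norm_num)
  set e := exp 12
  set T := A ^ 2 * K * X
  have hAT : A ≤ T := calc
    A ≤ A ^ 2 := by nlinarith
    _ ≤ A ^ 2 * (K * X) :=
      le_mul_of_one_le_right (by positivity) (one_le_mul_of_one_le_of_one_le hK hX)
    _ = T := (mul_assoc _ _ _).symm
  have hT : 1 ≤ T := hA.trans hAT
  have hy : 0 ≤ N * lam := by positivity
  have heT : T ≤ e * T := le_mul_of_one_le_left (by linarith) he
  have heTy : T * (N * lam) ≤ e * T * (N * lam) := by gcongr
  have hmain : 8 * A * N * (1 / P) ≤ 16 * e * T * (N * lam) := by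
    rw [mul_one_div, div_le_iff₀ (by linarith)]
    calc 8 * A * N ≤ 8 * A * N * (2 * e * A * K * X * lam * P) :=
          le_mul_of_one_le_right (mul_nonneg (by linarith) hN) h1
      _ = 16 * e * T * (N * lam) * P := by ring
  have hlin : 2 * A * lam * N / K ≤ 2 * T * (N * lam) := calc
    2 * A * lam * N / K ≤ 2 * A * (N * lam) :=
      (div_le_self (by positivity) hK).trans_eq (by ring)
    _ ≤ 2 * T * (N * lam) := by gcongr
  have hfirst : 2 * (A * lam * N / K + 2 / P) + 1 ≤ 2 * A * lam * N / K + 5 := by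
    have : 2 / P ≤ 2 := div_le_self zero_le_two hP
    have : 2 * A * lam * N / K = 2 * (A * lam * N / K) := by ring
    linarith
  have hexpand : (2 * A * lam * N / K + 5) * (2 * (2 / P) / (lam / K) + 1) =
      8 * A * N * (1 / P) + 2 * A * lam * N / K + 20 * (K / (P * lam)) + 5 := by
    field_simp; ring
  calc (2 * (A * lam * N / K + 2 / P) + 1) * (2 * (2 / P) / (lam / K) + 1)
      ≤ (2 * A * lam * N / K + 5) * (2 * (2 / P) / (lam / K) + 1) := by gcongr
    _ ≤ 100 * e * T * (1 + N * lam) := by rw [hexpand]; rcases h2 with h2 | h2 <;> nlinarith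

theorem le_of_le_sq_of_le_pair_count {𝒩 N A lam K P X : ℝ} (hA : 1 ≤ A) (hlam : 0 < lam)
    (hN : 0 ≤ N) (hK : 1 ≤ K) (hX : 1 ≤ X) (hP : 1 ≤ P)
    (h1 : 1 ≤ 2 * exp 12 * A * K * X * lam * P)
    (h2 : K / (P * lam) ≤ 2 * exp 12 * (A ^ 2 * K * X) ∨
      K / (P * lam) ≤ 4 * (A ^ 2 * K * X) ^ 2 * lam)
    (h𝒩sq : 𝒩 ≤ N ^ 2)
    (h𝒩 : 𝒩 ≤ N * (2 * (A * lam * N / K + 2 / P) + 1) * (2 * (2 / P) / (lam / K) + 1)) :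
    𝒩 ≤ 100 * exp 12 * A ^ 2 * K * N * X * (1 + N * lam) := by
  set T := A ^ 2 * K * X
  have hT : 1 ≤ T := one_le_mul_of_one_le_of_one_le
    (one_le_mul_of_one_le_of_one_le (one_le_pow₀ hA) hK) hX
  rw [show 100 * exp 12 * A ^ 2 * K * N * X * (1 + N * lam) =
    N * (100 * exp 12 * T * (1 + N * lam)) by ring]
  rcases le_or_gt N T with hNT | hNT
  · have h100 : 1 ≤ 100 * exp 12 := by nlinarith [one_le_exp (show (0 : ℝ) ≤ 12 by norm_num)]
    have hy : 1 ≤ 1 + N * lam := by nlinarith [mul_nonneg hN hlam.le]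
    calc 𝒩 ≤ N * (1 * T * 1) := h𝒩sq.trans (by rw [sq, one_mul, mul_one]; gcongr)
      _ ≤ _ := by gcongr
  · rw [mul_assoc] at h𝒩
    refine h𝒩.trans
      (mul_le_mul_of_nonneg_left (pair_count_bound_le hA hlam hN hK hX hP h1 ?_) hN)
    refine h2.imp id fun h => h.trans ?_
    calc 4 * T ^ 2 * lam = 4 * (T * lam) * T := by ring
      _ ≤ 4 * (T * lam) * N := by gcongr
      _ = 4 * T * (N * lam) := by ring

/-- Let `k ≥ 2`, `N ≥ 1`, and let `f` have continuous derivatives up to order `k`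
on `[0,N]`, with `0 < λk ≤ f⁽ᵏ⁾ ≤ A λk` on `(0,N)` where `A ≥ 1` and `A λk ≤ 1/4`.  Put
`H = ⌊(Aλk)^{-1/k}⌋` and let `𝒩` count pairs of positive integers `m, n ≤ N` with
`‖f⁽ʲ⁾(m)/j! − f⁽ʲ⁾(n)/j!‖ ≤ 2H^{-j}` for `1 ≤ j ≤ k-1`.  Then
`𝒩 ≤ C A² (k-1)! N λk^{-1/k} (1 + N λk)` with an absolute constant `C`. -/
theorem counting_simple : ∃ C : ℝ, 0 < C ∧
    ∀ (k : ℕ) (N A lam : ℝ) (f : ℝ → ℝ) (H 𝒩 : ℕ),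
      2 ≤ k → 1 ≤ N → 1 ≤ A → 0 < lam → A * lam ≤ 1 / 4 →
      ContDiffOn ℝ k f (Set.Icc 0 N) →
      (∀ x ∈ Set.Ioo (0 : ℝ) N,
        lam ≤ iteratedDerivWithin k f (Set.Icc 0 N) x ∧
        iteratedDerivWithin k f (Set.Icc 0 N) x ≤ A * lam) →
      H = ⌊(A * lam) ^ (-(1 : ℝ) / (k : ℝ))⌋₊ →
      𝒩 = Nat.card {p : ℕ × ℕ | 1 ≤ p.1 ∧ (p.1 : ℝ) ≤ N ∧ 1 ≤ p.2 ∧ (p.2 : ℝ) ≤ N ∧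
            ∀ j : ℕ, 1 ≤ j → j ≤ k - 1 →
              distNearestInt (iteratedDerivWithin j f (Set.Icc 0 N) p.1 / (j.factorial : ℝ)
                  - iteratedDerivWithin j f (Set.Icc 0 N) p.2 / (j.factorial : ℝ)) ≤
                2 * (H : ℝ) ^ (-(j : ℝ))} →
      (𝒩 : ℝ) ≤ C * A ^ 2 * ((k - 1).factorial : ℝ) * N * lam ^ (-(1 : ℝ) / (k : ℝ)) *
        (1 + N * lam) := by
  refine ⟨100 * exp 12, by positivity, ?_⟩
  intro k N A lam f H 𝒩 hk hN hA hlam hAlam hf hd hH h𝒩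
  obtain ⟨m, rfl⟩ : ∃ m, k = m + 1 := ⟨k - 1, by omega⟩
  rw [Nat.add_sub_cancel] at h𝒩 ⊢
  have hAlam0 : 0 < A * lam := mul_pos (by linarith) hlam
  have hK : (1 : ℝ) ≤ m ! := Nat.one_le_cast.mpr m.factorial_pos
  have hH1 : (1 : ℝ) ≤ H :=
    hH ▸ Nat.one_le_cast.mpr (one_le_floor_rpow_neg_inv hAlam0 (by linarith) _)
  have hHX := hH ▸ floor_rpow_neg_inv_le_rpow_neg_inv hA hlam (m + 1)
  have hfloor := hH ▸ one_le_mul_floor_rpow_neg_inv_add_one_pow hAlam0 m.succ_ne_zero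
  have hρ := add_one_pow_le_exp_mul_pow_or_le_factorial_mul_pow hH1 m
  have hδ : 2 * (H : ℝ) ^ (-(m : ℝ)) = 2 / H ^ m := by
    rw [rpow_neg H.cast_nonneg, rpow_natCast, div_eq_mul_inv]
  have hcount : 𝒩 ≤ #{p ∈ Icc 1 ⌊N⌋₊ ×ˢ Icc 1 ⌊N⌋₊ |
      distNearestInt (iteratedDerivWithin m f (Set.Icc 0 N) p.1 / (m ! : ℝ) -
        iteratedDerivWithin m f (Set.Icc 0 N) p.2 / (m ! : ℝ)) ≤ 2 / H ^ m} := by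
    rw [h𝒩]
    exact natCard_le_card_filter_Icc_floor fun p hp => (hp m (by omega) le_rfl).trans_eq hδ
  refine le_of_le_sq_of_le_pair_count hA hlam (by linarith) hK (hH1.trans hHX)
    (one_le_pow₀ hH1)
    (one_le_mul_pow_of_one_le_mul_add_one_pow (by linarith) hlam hK hH1 hHX hfloor hρ)
    (div_pow_mul_le_of_one_le_mul_add_one_pow hA hlam hK hH1 hHX hfloor hρ) ?_ ?_
  · calc (𝒩 : ℝ) ≤ #(Icc 1 ⌊N⌋₊ ×ˢ Icc 1 ⌊N⌋₊) := by
          exact_mod_cast hcount.trans (card_filter_le _ _)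
      _ ≤ N ^ 2 := by
        rw [card_product, Nat.card_Icc, Nat.add_sub_cancel, Nat.cast_mul, sq]
        gcongr <;> exact Nat.floor_le (by linarith)
  · exact (Nat.cast_le.mpr hcount).trans
      (card_filter_distNearestInt_iteratedDerivWithin_div_le (by linarith) hlam (by positivity)
        (by positivity) (by exact_mod_cast hf) hd)
end

section
/- Let k ≥ 3 be an integer, N ≥ 1, and suppose f : [0,N] → ℝ has continuous derivatives up to order k on (0,N), with 0 < λ_k ≤ f^{(k)}(x) ≤ A·λ_k for all x ∈ (0,N), where A ≥ 1 and A·λ_k ≤ 1/4. Put H = ⌊(Aλ_k)^{−1/k}⌋ and K = 1 + ⌊4Aλ_kN⌋. If m and n are positive integers with m, n ≤ N, |m − n| ≤ 1 + N/K, and ‖f^{(k−1)}(m)/(k−1)! − f^{(k−1)}(n)/(k−1)!‖ ≤ 4H^{1−k}, then |m − n| ≤ 4(k−1)!/(λ_k H^{k−1}). -/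
/-! By the mean value theorem, `f⁽ᵏ⁻¹⁾(m) - f⁽ᵏ⁻¹⁾(n) = f⁽ᵏ⁾(ξ)(m - n)` for some `ξ`, so the
difference `D` of the two normalised values satisfies `λ|m - n|/(k-1)! ≤ |D| ≤ Aλ(1 + N/K)`. Since
`Aλ ≤ 1/4` and `AλN/K < 1/4` by the choice of `K`, `|D| < 1/2`; hence `‖D‖ = |D|`, and the
hypothesis `‖D‖ ≤ 4H^{1-k}` turns the lower bound into the claim. -/

open Finset

open Set Topology

theorem distNearestInt_eq_abs_of_abs_lt_half {x : ℝ} (hx : |x| < 1 / 2) :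
    distNearestInt x = |x| := by
  have hround : round x = 0 :=
    round_eq_zero_iff.2 ⟨by linarith [neg_abs_le x], by linarith [le_abs_self x]⟩
  simp [distNearestInt, hround]

theorem hasDerivAt_iteratedDerivWithin {f : ℝ → ℝ} {s : Set ℝ} {n : ℕ} {x : ℝ}
    (hf : ContDiffOn ℝ (n + 1) f s) (hs : UniqueDiffOn ℝ s) (hx : s ∈ 𝓝 x) :
    HasDerivAt (iteratedDerivWithin n f s) (iteratedDerivWithin (n + 1) f s x) x := by
  rw [iteratedDerivWithin_succ]
  have hdiff := hf.differentiableOn_iteratedDerivWithin (by exact_mod_cast n.lt_succ_self) hs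
  exact (hdiff x (mem_of_mem_nhds hx)).hasDerivWithinAt.hasDerivAt hx

theorem mul_abs_sub_le_abs_sub_le_mul_abs_sub {g g' : ℝ → ℝ} {a b lo hi : ℝ}
    (hg : ContinuousOn g (Icc a b)) (hg' : ∀ x ∈ Ioo a b, HasDerivAt g (g' x) x)
    (hbounds : ∀ x ∈ Ioo a b, lo ≤ g' x ∧ g' x ≤ hi) (hlo : 0 ≤ lo)
    {x y : ℝ} (hx : x ∈ Icc a b) (hy : y ∈ Icc a b) :
    lo * |x - y| ≤ |g x - g y| ∧ |g x - g y| ≤ hi * |x - y| := by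
  wlog hyx : y ≤ x generalizing x y
  · rw [abs_sub_comm x, abs_sub_comm (g x)]
    exact this hy hx (le_of_not_ge hyx)
  have hbounds' : ∀ z ∈ interior (Icc a b), lo ≤ deriv g z ∧ deriv g z ≤ hi := by
    rw [interior_Icc]
    intro z hz
    rw [(hg' z hz).deriv]
    exact hbounds z hz
  have hdiff : DifferentiableOn ℝ g (interior (Icc a b)) := by
    rw [interior_Icc]
    exact fun z hz => (hg' z hz).differentiableAt.differentiableWithinAt
  have hlower := (convex_Icc a b).mul_sub_le_image_sub_of_le_deriv hg hdiff
    (fun z hz => (hbounds' z hz).1) y hy x hx hyx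
  have hupper := (convex_Icc a b).image_sub_le_mul_sub_of_deriv_le hg hdiff
    (fun z hz => (hbounds' z hz).2) y hy x hx hyx
  have hxy : 0 ≤ x - y := sub_nonneg.2 hyx
  rw [abs_of_nonneg hxy, abs_of_nonneg (le_trans (mul_nonneg hlo hxy) hlower)]
  exact ⟨hlower, hupper⟩

theorem mul_abs_sub_le_abs_iteratedDerivWithin_sub {f : ℝ → ℝ} {n : ℕ} {a b lo hi : ℝ}
    (hab : a < b) (hf : ContDiffOn ℝ (n + 1) f (Icc a b))
    (hbounds : ∀ x ∈ Ioo a b, lo ≤ iteratedDerivWithin (n + 1) f (Icc a b) x ∧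
      iteratedDerivWithin (n + 1) f (Icc a b) x ≤ hi)
    (hlo : 0 ≤ lo) {x y : ℝ} (hx : x ∈ Icc a b) (hy : y ∈ Icc a b) :
    lo * |x - y| ≤ |iteratedDerivWithin n f (Icc a b) x - iteratedDerivWithin n f (Icc a b) y| ∧
      |iteratedDerivWithin n f (Icc a b) x - iteratedDerivWithin n f (Icc a b) y| ≤
        hi * |x - y| :=
  mul_abs_sub_le_abs_sub_le_mul_abs_sub
    (hf.continuousOn_iteratedDerivWithin (by exact_mod_cast n.le_succ) (uniqueDiffOn_Icc hab))
    (fun _ hz => hasDerivAt_iteratedDerivWithin hf (uniqueDiffOn_Icc hab) (Icc_mem_nhds hz.1 hz.2))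
    hbounds hlo hx hy

theorem div_one_add_floor_lt_quarter (x : ℝ) : x / ((1 + ⌊4 * x⌋₊ : ℕ) : ℝ) < 1 / 4 := by
  have hfloor := Nat.lt_floor_add_one (4 * x)
  rw [div_lt_iff₀ (by positivity)]
  push_cast
  linarith

theorem close_pairs_general (k : ℕ) (N A lam : ℝ) (f : ℝ → ℝ) (H K : ℕ)
    (hk : 3 ≤ k) (hN : 1 ≤ N) (hA : 1 ≤ A) (hlam : 0 < lam) (hAl : A * lam ≤ 1 / 4)
    (hf : ContDiffOn ℝ k f (Set.Icc 0 N))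
    (hfk : ∀ x ∈ Set.Ioo (0 : ℝ) N,
      lam ≤ iteratedDerivWithin k f (Set.Icc 0 N) x ∧
      iteratedDerivWithin k f (Set.Icc 0 N) x ≤ A * lam)
    (hK : K = 1 + ⌊4 * A * lam * N⌋₊)
    (m n : ℕ) (hmN : (m : ℝ) ≤ N) (hnN : (n : ℝ) ≤ N)
    (hclose : |(m : ℝ) - (n : ℝ)| ≤ 1 + N / (K : ℝ))
    (hnear : distNearestInt
        (iteratedDerivWithin (k - 1) f (Set.Icc 0 N) m / ((k - 1).factorial : ℝ)
          - iteratedDerivWithin (k - 1) f (Set.Icc 0 N) n / ((k - 1).factorial : ℝ)) ≤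
        4 * (H : ℝ) ^ ((1 : ℝ) - (k : ℝ))) :
    |(m : ℝ) - (n : ℝ)| ≤ 4 * ((k - 1).factorial : ℝ) / (lam * (H : ℝ) ^ ((k : ℝ) - 1)) := by
  obtain ⟨j, rfl⟩ : ∃ j, k = j + 1 := ⟨k - 1, by omega⟩
  rw [Nat.add_sub_cancel] at hnear ⊢
  set g := iteratedDerivWithin j f (Icc 0 N)
  set c : ℝ := (j.factorial : ℝ)
  have hc : 1 ≤ c := Nat.one_le_cast.2 j.factorial_pos
  have hmvt := mul_abs_sub_le_abs_iteratedDerivWithin_sub (by linarith) (by exact_mod_cast hf)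
    hfk hlam.le (x := m) (y := n) ⟨m.cast_nonneg, hmN⟩ ⟨n.cast_nonneg, hnN⟩
  have hD : |g m / c - g n / c| = |g m - g n| / c := by
    rw [div_sub_div_same, abs_div, abs_of_pos (by positivity : (0 : ℝ) < c)]
  have hK4 : A * lam * N / K < 1 / 4 := by
    simpa [hK, mul_assoc] using div_one_add_floor_lt_quarter (A * lam * N)
  have hhalf : |g m / c - g n / c| < 1 / 2 := by
    have hAlam : 0 ≤ A * lam := by positivity
    rw [hD, div_lt_iff₀ (by positivity)]
    calc |g m - g n| ≤ A * lam * |(m : ℝ) - n| := hmvt.2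
      _ ≤ A * lam * (1 + N / K) := by gcongr
      _ = A * lam + A * lam * N / K := by ring
      _ < 1 / 2 * c := by linarith
  rw [distNearestInt_eq_abs_of_abs_lt_half hhalf, hD,
    show (1 : ℝ) - ((j + 1 : ℕ) : ℝ) = -(((j + 1 : ℕ) : ℝ) - 1) by ring,
    Real.rpow_neg H.cast_nonneg] at hnear
  calc |(m : ℝ) - n| = lam * |(m : ℝ) - n| / c * (c / lam) := by field_simp
    _ ≤ |g m - g n| / c * (c / lam) := by gcongr; exact hmvt.1
    _ ≤ 4 * ((H : ℝ) ^ (((j + 1 : ℕ) : ℝ) - 1))⁻¹ * (c / lam) := by gcongr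
    _ = 4 * c / (lam * (H : ℝ) ^ (((j + 1 : ℕ) : ℝ) - 1)) := by ring

/-- Let `k ≥ 3`, `N ≥ 1`, and let `f` have continuous derivatives up to order `k` on `[0,N]`,
with `0 < λk ≤ f⁽ᵏ⁾ ≤ A λk` on `(0,N)`, `A ≥ 1`, `A λk ≤ 1/4`.  Put `H = ⌊(Aλk)^{-1/k}⌋` and
`K = 1 + ⌊4Aλk N⌋`.  If `m, n ≤ N` are positive integers with `|m − n| ≤ 1 + N/K` and
`‖f⁽ᵏ⁻¹⁾(m)/(k-1)! − f⁽ᵏ⁻¹⁾(n)/(k-1)!‖ ≤ 4H^{1-k}`, then `|m − n| ≤ 4(k-1)!/(λk H^{k-1})`. -/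
theorem close_pairs (k : ℕ) (N A lam : ℝ) (f : ℝ → ℝ) (H K : ℕ)
    (hk : 3 ≤ k) (hN : 1 ≤ N) (hA : 1 ≤ A) (hlam : 0 < lam) (hAl : A * lam ≤ 1 / 4)
    (hf : ContDiffOn ℝ k f (Set.Icc 0 N))
    (hfk : ∀ x ∈ Set.Ioo (0 : ℝ) N,
      lam ≤ iteratedDerivWithin k f (Set.Icc 0 N) x ∧
      iteratedDerivWithin k f (Set.Icc 0 N) x ≤ A * lam)
    (hH : H = ⌊(A * lam) ^ (-(1 : ℝ) / (k : ℝ))⌋₊)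
    (hK : K = 1 + ⌊4 * A * lam * N⌋₊)
    (m n : ℕ) (hm : 1 ≤ m) (hmN : (m : ℝ) ≤ N) (hn : 1 ≤ n) (hnN : (n : ℝ) ≤ N)
    (hclose : |(m : ℝ) - (n : ℝ)| ≤ 1 + N / (K : ℝ))
    (hnear : distNearestInt
        (iteratedDerivWithin (k - 1) f (Set.Icc 0 N) m / ((k - 1).factorial : ℝ)
          - iteratedDerivWithin (k - 1) f (Set.Icc 0 N) n / ((k - 1).factorial : ℝ)) ≤
        4 * (H : ℝ) ^ ((1 : ℝ) - (k : ℝ))) :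
    |(m : ℝ) - (n : ℝ)| ≤ 4 * ((k - 1).factorial : ℝ) / (lam * (H : ℝ) ^ ((k : ℝ) - 1)) :=
  close_pairs_general k N A lam f H K hk hN hA hlam hAl hf hfk hK m n hmN hnN hclose hnear
end

section
/- Let B, C > 0, let g₁, g₂ : ℤ → ℝ be arbitrary functions, let N be a positive real number, and let K be a positive integer. Define φ(x,y) = max(1 − B^{−1}‖x‖, 0) · max(1 − C^{−1}‖y‖, 0). Then ∑_{1 ≤ m,n ≤ N} φ(g₁(m) − g₁(n), g₂(m) − g₂(n)) ≤ K · ∑_{1 ≤ m,n ≤ N, |m−n| ≤ 1 + N/K} φ(g₁(m) − g₁(n), g₂(m) − g₂(n)), where in both sums m and n range over positive integers at most N. -/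
/-!
For `B ≤ 1/2`, `B * max (1 - B⁻¹‖z‖) 0` is the length of the overlap of two arcs of length `B`
on `ℝ/ℤ` whose centres are at distance `‖z‖`; so `(x, y) ↦ max (1 - B⁻¹‖x - y‖) 0` is a Gram
kernel in `L²(ℝ/ℤ)`, hence positive semidefinite. For `B > 1/2` it is a nonnegative combination of
the constant kernel and the kernel with `B = 1/2`, and `φ`, a product of two such kernels, is
positive semidefinite by the Schur product theorem.

Split `{1, …, N}` into `K` blocks of consecutive integers of length at most `1 + N/K`, and let
`T k l` be the sum of `φ` over the pairs from blocks `k` and `l`. Positive semidefiniteness applied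
to the difference of the indicators of two blocks gives `T k l + T l k ≤ T k k + T l l`; summing over
all `k, l` bounds the full sum by `K ∑ₖ T k k`, which only involves pairs with `|m - n| ≤ 1 + N/K`.
-/

open Finset

/-- The weight `φ(x,y) = max(1 − B⁻¹‖x‖, 0) · max(1 − C⁻¹‖y‖, 0)`. -/
noncomputable def phiWeight (B C x y : ℝ) : ℝ :=
  max (1 - B⁻¹ * distNearestInt x) 0 * max (1 - C⁻¹ * distNearestInt y) 0

namespace Matrix

variable {ι κ : Type*}

theorem posSemidef_iff_sum_mul_mul_nonneg {A : Matrix ι ι ℝ} :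
    A.PosSemidef ↔ A.IsHermitian ∧
      ∀ (s : Finset ι) (v : ι → ℝ), 0 ≤ ∑ i ∈ s, ∑ j ∈ s, v i * A i j * v j := by
  refine ⟨fun hA => ⟨hA.isHermitian, fun s v => ?_⟩, fun ⟨hA, h⟩ => ⟨hA, fun x => ?_⟩⟩
  · set x := Finsupp.indicator s fun i _ => v i
    have hxs : x.support ⊆ s := Finsupp.support_indicator_subset _ _
    have hxv : ∀ i ∈ s, x i = v i := fun i hi => Finsupp.indicator_of_mem hi _
    refine (hA.2 x).trans_eq ?_
    rw [Finsupp.sum_of_support_subset x hxs _ (by simp)]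
    refine sum_congr rfl fun i hi => ?_
    rw [Finsupp.sum_of_support_subset x hxs _ (by simp)]
    refine sum_congr rfl fun j hj => ?_
    rw [hxv i hi, hxv j hj, star_trivial]
  · simpa [Finsupp.sum] using h x.support x

theorem PosSemidef.sum_mul_mul_nonneg {A : Matrix ι ι ℝ} (hA : A.PosSemidef) (s : Finset ι)
    (v : ι → ℝ) : 0 ≤ ∑ i ∈ s, ∑ j ∈ s, v i * A i j * v j :=
  (posSemidef_iff_sum_mul_mul_nonneg.mp hA).2 s v

theorem PosSemidef.sum_le_card_mul_sum_fiber [DecidableEq κ] {A : Matrix ι ι ℝ}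
    (hA : A.PosSemidef) {s : Finset ι} {t : Finset κ} {b : ι → κ} (hb : ∀ i ∈ s, b i ∈ t) :
    ∑ i ∈ s, ∑ j ∈ s, A i j ≤ #t * ∑ i ∈ s, ∑ j ∈ s with b i = b j, A i j := by
  set T : κ → κ → ℝ := fun k l => ∑ i ∈ s with b i = k, ∑ j ∈ s with b j = l, A i j
  have h_total : ∑ i ∈ s, ∑ j ∈ s, A i j = ∑ k ∈ t, ∑ l ∈ t, T k l := calc
    _ = ∑ i ∈ s, ∑ l ∈ t, ∑ j ∈ s with b j = l, A i j := by
      simp only [sum_fiberwise_of_maps_to hb]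
    _ = ∑ k ∈ t, ∑ i ∈ s with b i = k, ∑ l ∈ t, ∑ j ∈ s with b j = l, A i j :=
      (sum_fiberwise_of_maps_to hb _).symm
    _ = _ := sum_congr rfl fun k _ => sum_comm
  have h_diag : ∑ k ∈ t, T k k = ∑ i ∈ s, ∑ j ∈ s with b i = b j, A i j := by
    rw [← sum_fiberwise_of_maps_to hb]
    refine sum_congr rfl fun k _ => sum_congr rfl fun i hi => sum_congr ?_ fun _ _ => rfl
    exact filter_congr fun j _ => by rw [(mem_filter.mp hi).2, eq_comm]
  have h_pair : ∀ k l, T k l + T l k ≤ T k k + T l l := by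
    set χ : κ → ι → ℝ := fun k i => if b i = k then 1 else 0
    have hT : ∀ k l, T k l = ∑ i ∈ s, ∑ j ∈ s, χ k i * A i j * χ l j := by
      intro k l
      simp only [T, χ, sum_filter]
      refine sum_congr rfl fun i _ => ?_
      split_ifs <;> simp
    intro k l
    have h := hA.sum_mul_mul_nonneg s (χ k - χ l)
    simp only [Pi.sub_apply, sub_mul, mul_sub, sum_sub_distrib, ← hT] at h
    linarith
  have h_sum := sum_le_sum fun k (_ : k ∈ t) => sum_le_sum fun l (_ : l ∈ t) => h_pair k l
  simp only [sum_add_distrib, sum_const, nsmul_eq_mul] at h_sum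
  rw [sum_comm (f := fun k l => T l k), ← mul_sum] at h_sum
  rw [h_total, ← h_diag]
  linarith

end Matrix

open MeasureTheory

theorem distNearestInt_le_half (x : ℝ) : distNearestInt x ≤ 1 / 2 := abs_sub_round x

theorem distNearestInt_le_abs (x : ℝ) : distNearestInt x ≤ |x| := by
  simpa [distNearestInt] using round_le x 0

theorem distNearestInt_neg (x : ℝ) : distNearestInt (-x) = distNearestInt x := by
  have h : ∀ x : ℝ, distNearestInt (-x) ≤ distNearestInt x := fun x => by
    simpa [distNearestInt, abs_sub_comm, neg_add_eq_sub] using round_le (-x) (-round x)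
  exact le_antisymm (h x) (by simpa using h (-x))

theorem distNearestInt_add_intCast (x : ℝ) (m : ℤ) :
    distNearestInt (x + m) = distNearestInt x := by
  simp [distNearestInt, round_add_intCast]

theorem min_abs_one_sub_abs_le_distNearestInt (x : ℝ) :
    min |x| (1 - |x|) ≤ distNearestInt x := by
  rcases eq_or_ne (round x) 0 with hr | hr
  · simp [distNearestInt, hr]
  · have : (1 : ℝ) ≤ |(round x : ℝ)| := by exact_mod_cast Int.one_le_abs hr
    calc min |x| (1 - |x|) ≤ 1 - |x| := min_le_right _ _
      _ ≤ |(round x : ℝ)| - |x| := by linarith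
      _ ≤ distNearestInt x := by
        rw [distNearestInt, abs_sub_comm]; exact abs_sub_abs_le_abs_sub _ _

theorem distNearestInt_lt_iff_abs_lt {x r : ℝ} (hx : |x| ≤ 1 - r) :
    distNearestInt x < r ↔ |x| < r := by
  refine ⟨fun h => ?_, (distNearestInt_le_abs x).trans_lt⟩
  by_contra! hr
  exact (le_min hr (by linarith)).trans (min_abs_one_sub_abs_le_distNearestInt x) |>.not_gt h

theorem measurable_distNearestInt : Measurable distNearestInt := by
  have : distNearestInt = fun x => min (Int.fract x) (1 - Int.fract x) :=
    funext abs_sub_round_eq_min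
  rw [this]
  exact measurable_fract.min (measurable_const.sub measurable_fract)

theorem volume_real_abs_lt_inter_abs_sub_lt (r δ : ℝ) :
    volume.real {s : ℝ | |s| < r ∧ |s - δ| < r} = max (2 * r - |δ|) 0 := by
  have hI : {s : ℝ | |s| < r ∧ |s - δ| < r} = Set.Ioo (-r ⊔ (δ - r)) (r ⊓ (δ + r)) := by
    ext s; simp only [Set.mem_ofPred_eq, abs_lt, Set.mem_Ioo, max_lt_iff, lt_min_iff]
    constructor <;> rintro ⟨⟨_, _⟩, _, _⟩ <;> refine ⟨⟨?_, ?_⟩, ?_, ?_⟩ <;> linarith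
  have hlen : r ⊓ (δ + r) - (-r ⊔ (δ - r)) = 2 * r - |δ| := by
    rcases le_total 0 δ with h | h
    · rw [min_eq_left (by linarith), max_eq_right (by linarith), abs_of_nonneg h]; ring
    · rw [min_eq_right (by linarith), max_eq_left (by linarith), abs_of_nonpos h]; ring
  rw [hI, Real.volume_real_Ioo, hlen]

noncomputable def arcIndicator (r x t : ℝ) : ℝ := if distNearestInt (t - x) < r then 1 else 0

theorem periodic_arcIndicator (r x : ℝ) : Function.Periodic (arcIndicator r x) 1 := fun t => by
  simpa [arcIndicator, sub_add_eq_add_sub] using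
    congrArg (fun d => if d < r then (1 : ℝ) else 0) (distNearestInt_add_intCast (t - x) 1)

theorem measurable_arcIndicator (r x : ℝ) : Measurable (arcIndicator r x) :=
  Measurable.ite (measurableSet_lt (measurable_distNearestInt.comp (measurable_sub_const x))
    measurable_const) measurable_const measurable_const

-- Since `r ≤ 1/4`, on `[-1/2, 1/2]` neither arc wraps around the circle.
theorem arcIndicator_mul_arcIndicator_add {r : ℝ} (hr : r ≤ 1 / 4) (x y : ℝ) {s : ℝ}
    (hs : |s| ≤ 1 / 2) :
    arcIndicator r x (s + x) * arcIndicator r y (s + x) =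
      {s : ℝ | |s| < r ∧ |s - ((y - x) - round (y - x))| < r}.indicator 1 s := by
  set δ := (y - x) - round (y - x)
  have hδ : |δ| ≤ 1 / 2 := abs_sub_round _
  have hy : distNearestInt (s + x - y) = distNearestInt (s - δ) := by
    rw [show s - δ = s + x - y + round (y - x) by ring, distNearestInt_add_intCast]
  simp only [arcIndicator, add_sub_cancel_right, hy, Set.indicator_apply, Set.mem_ofPred_eq,
    Pi.one_apply, distNearestInt_lt_iff_abs_lt (show |s| ≤ 1 - r by linarith)]
  by_cases h0 : |s| < r
  · have : |s - δ| ≤ 1 - r := by linarith [abs_sub s δ]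
    simp [h0, distNearestInt_lt_iff_abs_lt this]
  · simp [h0]

theorem integral_arcIndicator_mul_arcIndicator {r : ℝ} (hr : r ≤ 1 / 4) (x y : ℝ) :
    ∫ t in (0 : ℝ)..1, arcIndicator r x t * arcIndicator r y t =
      max (2 * r - distNearestInt (x - y)) 0 := by
  set F := fun t => arcIndicator r x t * arcIndicator r y t
  have hF : Function.Periodic F 1 := fun t => by
    simp only [F, periodic_arcIndicator r x t, periodic_arcIndicator r y t]
  have h_center : ∫ t in (0 : ℝ)..1, F t = ∫ s in (-(1 / 2) : ℝ)..(1 / 2), F (s + x) := by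
    calc ∫ t in (0 : ℝ)..1, F t = ∫ t in (0 : ℝ) + x..1 + x, F t := by
          convert hF.intervalIntegral_add_eq 0 x using 2 <;> ring
      _ = ∫ s in (0 : ℝ)..1, F (s + x) := (intervalIntegral.integral_comp_add_right F x).symm
      _ = _ := by
          convert (hF.add_const x).intervalIntegral_add_eq 0 (-(1 / 2)) using 2 <;> norm_num
  set δ := (y - x) - round (y - x)
  set I := {s : ℝ | |s| < r ∧ |s - δ| < r}
  have hI : MeasurableSet I := by measurability
  have hdist : distNearestInt (x - y) = |δ| := by rw [← distNearestInt_neg, neg_sub]; rfl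
  calc ∫ t in (0 : ℝ)..1, F t = ∫ s in (-(1 / 2) : ℝ)..(1 / 2), I.indicator 1 s := by
        rw [h_center]
        refine intervalIntegral.integral_congr fun s hs => ?_
        rw [Set.uIcc_of_le (by norm_num)] at hs
        exact arcIndicator_mul_arcIndicator_add hr x y (abs_le.mpr hs)
    _ = ∫ s, I.indicator 1 s := by
        rw [intervalIntegral.integral_of_le (by norm_num)]
        refine setIntegral_eq_integral_of_forall_compl_eq_zero fun s hs => ?_
        refine Set.indicator_of_notMem (fun h => hs ?_) _
        have := abs_lt.mp (h.1.trans_le (hr.trans (by norm_num : (1 : ℝ) / 4 ≤ 1 / 2)))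
        exact ⟨this.1, this.2.le⟩
    _ = _ := by rw [integral_indicator_one hI, volume_real_abs_lt_inter_abs_sub_lt, hdist]

theorem intervalIntegrable_arcIndicator_mul_arcIndicator (r x y a b : ℝ) :
    IntervalIntegrable (fun t => arcIndicator r x t * arcIndicator r y t) volume a b := by
  refine IntervalIntegrable.mono_fun' (g := fun _ => 1) intervalIntegrable_const
    ((measurable_arcIndicator r x).mul (measurable_arcIndicator r y)).aestronglyMeasurable
    (Filter.Eventually.of_forall fun t => ?_)
  simp only [arcIndicator]
  split_ifs <;> norm_num

noncomputable def tent (B z : ℝ) : ℝ := max (1 - B⁻¹ * distNearestInt z) 0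

theorem tent_neg (B z : ℝ) : tent B (-z) = tent B z := by
  rw [tent, tent, distNearestInt_neg]

theorem mul_tent {B : ℝ} (hB : 0 < B) (z : ℝ) : B * tent B z = max (B - distNearestInt z) 0 := by
  rw [tent, mul_max_of_nonneg _ _ hB.le, mul_zero, mul_sub, mul_one, mul_inv_cancel_left₀ hB.ne']

theorem tent_sub_eq_integral {B : ℝ} (hB : 0 < B) (hB2 : B ≤ 1 / 2) (x y : ℝ) :
    tent B (x - y) =
      B⁻¹ * ∫ t in (0 : ℝ)..1, arcIndicator (B / 2) x t * arcIndicator (B / 2) y t := by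
  rw [integral_arcIndicator_mul_arcIndicator (by linarith), mul_div_cancel₀ _ two_ne_zero,
    ← mul_tent hB, inv_mul_cancel_left₀ hB.ne']

theorem tent_eq_of_half_lt {B : ℝ} (hB : 1 / 2 < B) (z : ℝ) :
    tent B z = (1 - (2 * B)⁻¹) + (2 * B)⁻¹ * tent (1 / 2) z := by
  have hd := distNearestInt_le_half z
  have hB0 : 0 < B := by linarith
  rw [tent, tent, max_eq_left, max_eq_left]
  · field_simp; ring
  · norm_num; linarith
  · rw [sub_nonneg, inv_mul_le_iff₀ hB0]; linarith

theorem sum_mul_tent_mul_nonneg_of_le_half {B : ℝ} (hB : 0 < B) (hB2 : B ≤ 1 / 2)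
    (s : Finset ℝ) (v : ℝ → ℝ) : 0 ≤ ∑ x ∈ s, ∑ y ∈ s, v x * tent B (x - y) * v y := by
  set a := arcIndicator (B / 2)
  have h_int (x y : ℝ) : IntervalIntegrable (fun t => v x * v y * (a x t * a y t)) volume 0 1 :=
    (intervalIntegrable_arcIndicator_mul_arcIndicator _ x y 0 1).const_mul _
  have h_gram : ∑ x ∈ s, ∑ y ∈ s, v x * tent B (x - y) * v y =
      B⁻¹ * ∫ t in (0 : ℝ)..1, (∑ x ∈ s, v x * a x t) ^ 2 := calc
    _ = B⁻¹ * ∑ x ∈ s, ∑ y ∈ s, ∫ t in (0 : ℝ)..1, v x * v y * (a x t * a y t) := by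
      simp only [tent_sub_eq_integral hB hB2, intervalIntegral.integral_const_mul, mul_sum]
      exact sum_congr rfl fun _ _ => sum_congr rfl fun _ _ => by ring
    _ = B⁻¹ * ∫ t in (0 : ℝ)..1, ∑ x ∈ s, ∑ y ∈ s, v x * v y * (a x t * a y t) := by
      have h_row (x : ℝ) :
          IntervalIntegrable (fun t => ∑ y ∈ s, v x * v y * (a x t * a y t)) volume 0 1 := by
        simpa only [Finset.sum_fn] using IntervalIntegrable.sum s fun y _ => h_int x y
      rw [intervalIntegral.integral_finsetSum fun x _ => h_row x]
      simp only [intervalIntegral.integral_finsetSum fun y _ => h_int _ y]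
    _ = _ := by
      simp only [sq, sum_mul_sum]
      exact congrArg _ (intervalIntegral.integral_congr fun t _ =>
        sum_congr rfl fun _ _ => sum_congr rfl fun _ _ => by ring)
  rw [h_gram]
  exact mul_nonneg (inv_nonneg.mpr hB.le)
    (intervalIntegral.integral_nonneg zero_le_one fun t _ => sq_nonneg _)

theorem sum_mul_tent_mul_nonneg {B : ℝ} (hB : 0 < B) (s : Finset ℝ) (v : ℝ → ℝ) :
    0 ≤ ∑ x ∈ s, ∑ y ∈ s, v x * tent B (x - y) * v y := by
  rcases le_or_gt B (1 / 2) with hB2 | hB2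
  · exact sum_mul_tent_mul_nonneg_of_le_half hB hB2 s v
  have hc : (2 * B)⁻¹ ≤ 1 := inv_le_one_of_one_le₀ (by linarith)
  have h_split : ∑ x ∈ s, ∑ y ∈ s, v x * tent B (x - y) * v y =
      (1 - (2 * B)⁻¹) * (∑ x ∈ s, v x) ^ 2 +
        (2 * B)⁻¹ * ∑ x ∈ s, ∑ y ∈ s, v x * tent (1 / 2) (x - y) * v y := by
    rw [sq, sum_mul_sum, mul_sum, mul_sum, ← sum_add_distrib]
    refine sum_congr rfl fun x _ => ?_
    rw [mul_sum, mul_sum, ← sum_add_distrib]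
    exact sum_congr rfl fun y _ => by rw [tent_eq_of_half_lt hB2]; ring
  rw [h_split]
  have := sum_mul_tent_mul_nonneg_of_le_half (by norm_num) le_rfl s v
  positivity

theorem posSemidef_tent {B : ℝ} (hB : 0 < B) :
    (Matrix.of fun x y : ℝ => tent B (x - y)).PosSemidef := by
  refine Matrix.posSemidef_iff_sum_mul_mul_nonneg.mpr
    ⟨Matrix.IsHermitian.ext fun x y => ?_, sum_mul_tent_mul_nonneg hB⟩
  simp [← tent_neg B (y - x)]

theorem posSemidef_phiWeight {ι : Type*} {B C : ℝ} (hB : 0 < B) (hC : 0 < C) (g₁ g₂ : ι → ℝ) :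
    (Matrix.of fun m n => phiWeight B C (g₁ m - g₁ n) (g₂ m - g₂ n)).PosSemidef :=
  ((posSemidef_tent hB).submatrix g₁).hadamard ((posSemidef_tent hC).submatrix g₂)

theorem abs_sub_mul_lt_of_mul_div_eq {m n K D : ℕ} (hD : 0 < D) (h : m * K / D = n * K / D) :
    |(m : ℝ) - n| * K < D := by
  have h₁ := Nat.div_mul_le_self (m * K) D
  have h₂ := Nat.lt_div_mul_add (a := m * K) hD
  have h₃ := Nat.div_mul_le_self (n * K) D
  have h₄ := Nat.lt_div_mul_add (a := n * K) hD
  rw [h] at h₁ h₂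
  have : (m * K : ℤ) - n * K < D ∧ (n * K : ℤ) - m * K < D := by omega
  rw [← abs_of_nonneg (Nat.cast_nonneg (α := ℝ) K), ← abs_mul, sub_mul, abs_sub_lt_iff]
  exact_mod_cast this

theorem phiWeight_nonneg (B C x y : ℝ) : 0 ≤ phiWeight B C x y :=
  mul_nonneg (le_max_right _ _) (le_max_right _ _)

/-- The localization step: for `B, C > 0`, arbitrary `g₁, g₂ : ℤ → ℝ`, a positive real `N`
and a positive integer `K`,
`∑_{1≤m,n≤N} φ(g₁(m)−g₁(n), g₂(m)−g₂(n))
  ≤ K ∑_{1≤m,n≤N, |m−n|≤1+N/K} φ(g₁(m)−g₁(n), g₂(m)−g₂(n))`. -/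
theorem localization (B C : ℝ) (hB : 0 < B) (hC : 0 < C) (g₁ g₂ : ℤ → ℝ)
    (N : ℝ) (hN : 0 < N) (K : ℕ) (hK : 0 < K) :
    ∑ m ∈ Finset.Icc 1 ⌊N⌋₊, ∑ n ∈ Finset.Icc 1 ⌊N⌋₊,
        phiWeight B C (g₁ m - g₁ n) (g₂ m - g₂ n) ≤
      (K : ℝ) * ∑ m ∈ Finset.Icc 1 ⌊N⌋₊,
        ∑ n ∈ (Finset.Icc 1 ⌊N⌋₊).filter (fun n : ℕ => |(m : ℝ) - (n : ℝ)| ≤ 1 + N / (K : ℝ)),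
          phiWeight B C (g₁ m - g₁ n) (g₂ m - g₂ n) := by
  set M := ⌊N⌋₊
  set b : ℕ → ℕ := fun n => n * K / (M + 1)
  have hb : ∀ n ∈ Icc 1 M, b n ∈ range K := fun n hn =>
    mem_range.mpr (Nat.div_lt_of_lt_mul (by nlinarith [(mem_Icc.mp hn).2]))
  have h_near : ∀ m n, b m = b n → |(m : ℝ) - n| ≤ 1 + N / K := fun m n h => by
    have h_block := abs_sub_mul_lt_of_mul_div_eq M.succ_pos h
    have hM : (M : ℝ) ≤ N := Nat.floor_le hN.le
    have hK' : (1 : ℝ) ≤ K := by exact_mod_cast hK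
    push_cast at h_block
    rw [one_add_div (by positivity), le_div_iff₀ (by positivity)]
    linarith
  calc _ ≤ #(range K) * ∑ m ∈ Icc 1 M, ∑ n ∈ Icc 1 M with b m = b n,
          phiWeight B C (g₁ m - g₁ n) (g₂ m - g₂ n) :=
        (posSemidef_phiWeight hB hC (fun m : ℕ => g₁ m) (fun m : ℕ => g₂ m))
          |>.sum_le_card_mul_sum_fiber hb
    _ ≤ _ := by
        rw [card_range]
        gcongr with m _ n
        · exact fun _ _ _ => phiWeight_nonneg _ _ _ _
        · exact h_near m n
end
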